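/- arXiv:1503.03981 — 5 statements merged into one kernel-verified Lean document; each statement's English description precedes it below -/
import Mathlib

section
/- Let R be a finite unital ring and let A and E be finite R-modules. Then there exists a positive integer ℓ such that for every positive integer n, every submodule C of A^n, and every R-linear map h : C → E, there exist an R-linear map p : A^n → A^ℓ and an R-linear map k : p(C) → E (where p(C) is the image submodule of C under p) satisfying k(p(x)) = h(x) for all x ∈ C. -/
/-!
A finite group has finitely many characters into `ℚ/ℤ`, so the set `Ψ` of functions from
characters of `E` to characters of `A` is finite; take `ℓ = |Ψ|`.
Given `h : C → E`, extend each `χ ∘ h` to a character `G χ` of `Aⁿ` (`ℚ/ℤ` is injective). Each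
coordinate `j` then determines a point `χ ↦ G χ ∘ single j` of `Ψ`, and `p` adds up the coordinates
that determine the same point. Then `G χ` factors through `p`, so `ker p ∩ C ⊆ ker (χ ∘ h)` for all
`χ`, and since characters separate points, `h` factors through `p(C)`.
-/

open Finset

instance AddCircle.finite_addMonoidHom (M : Type*) [AddCommGroup M] [Finite M] :
    Finite (M →+ AddCircle (1 : ℚ)) := by
  have : Finite {u : AddCircle (1 : ℚ) | Nat.card M • u = 0} :=
    (AddCircle.finite_torsion 1 Nat.card_pos).to_subtype
  refine Finite.of_injective (fun χ : M →+ AddCircle (1 : ℚ) => fun m =>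
    (⟨χ m, by simp [← map_nsmul, card_nsmul_eq_zero']⟩ :
      {u : AddCircle (1 : ℚ) | Nat.card M • u = 0})) fun χ χ' hχ => ?_
  ext m
  exact congrArg Subtype.val (congrFun hχ m)

section FiberSum

variable (R : Type*) {A : Type*} [Semiring R] [AddCommMonoid A] [Module R A]
  {ι κ : Type*} [Fintype ι] [DecidableEq κ]

def fiberSum (c : ι → κ) : (ι → A) →ₗ[R] (κ → A) :=
  ∑ j, (LinearMap.single R (fun _ => A) (c j)).comp (LinearMap.proj j)

variable {R}

lemma fiberSum_apply (c : ι → κ) (x : ι → A) (i : κ) :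
    fiberSum R c x i = ∑ j with c j = i, x j := by
  simp [fiberSum, Pi.single_apply, Finset.sum_ite, eq_comm]

lemma apply_eq_sum_fiberSum [DecidableEq ι] [Fintype κ] {B : Type*} [AddCommMonoid B]
    (c : ι → κ) (G : (ι → A) →+ B) (φ : κ → A →+ B) (hG : ∀ j a, G (Pi.single j a) = φ (c j) a)
    (x : ι → A) : G x = ∑ i, φ i (fiberSum R c x i) := by
  calc G x = ∑ j, φ (c j) (x j) := by
        conv_lhs => rw [← Finset.univ_sum_single x]
        simp [map_sum, hG]
    _ = ∑ i, ∑ j with c j = i, φ i (x j) := by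
        rw [← Finset.sum_fiberwise univ c]
        exact sum_congr rfl fun i _ => sum_congr rfl fun j hj => by rw [(mem_filter.1 hj).2]
    _ = ∑ i, φ i (fiberSum R c x i) := by simp only [fiberSum_apply, map_sum]

end FiberSum

lemma LinearMap.exists_comp_eq_of_surjective_of_ker_le {R M N E : Type*} [Ring R]
    [AddCommGroup M] [Module R M] [AddCommGroup N] [Module R N] [AddCommGroup E] [Module R E]
    {f : M →ₗ[R] N} (hf : Function.Surjective f) {h : M →ₗ[R] E} (hker : ker f ≤ ker h) :
    ∃ g : N →ₗ[R] E, g ∘ₗ f = h :=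
  ⟨(ker f).liftQ h hker ∘ₗ (f.quotKerEquivOfSurjective hf).symm.toLinearMap, by
    ext x
    have : (f.quotKerEquivOfSurjective hf).symm (f x) = Submodule.Quotient.mk x :=
      (LinearEquiv.symm_apply_eq _).2 rfl
    simp [this]⟩

theorem stmt_2_general
    (R : Type*) [Ring R]
    (A : Type*) [AddCommGroup A] [Module R A] [Fintype A]
    (E : Type*) [AddCommGroup E] [Module R E] [Fintype E] :
    ∃ ℓ : ℕ, 0 < ℓ ∧
      ∀ (n : ℕ), 0 < n →
        ∀ (C : Submodule R (Fin n → A)) (h : C →ₗ[R] E),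
          ∃ (p : (Fin n → A) →ₗ[R] (Fin ℓ → A))
            (g : (C.map p) →ₗ[R] E),
            ∀ x : C, g ⟨p x, Submodule.mem_map_of_mem x.2⟩ = h x := by
  classical
  obtain ⟨ℓ, ⟨e⟩⟩ := Finite.exists_equiv_fin
    ((E →+ AddCircle (1 : ℚ)) → (A →+ AddCircle (1 : ℚ)))
  refine ⟨ℓ, Fin.pos_iff_nonempty.mpr ⟨e 0⟩, fun n _ C h => ?_⟩
  choose G hG using fun χ : E →+ AddCircle (1 : ℚ) =>
    (Module.Baer.of_divisible _).extension_property_addMonoidHom C.subtype.toAddMonoidHom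
      C.injective_subtype (χ.comp h.toAddMonoidHom)
  let c : Fin n → Fin ℓ := fun j => e fun χ => (G χ).comp (AddMonoidHom.single (fun _ => A) j)
  have hker : LinearMap.ker ((fiberSum R c).submoduleMap C) ≤ LinearMap.ker h := by
    intro x hx
    refine CharacterModule.eq_zero_of_character_apply fun χ => ?_
    have hpx : fiberSum R c (x : Fin n → A) = 0 := congrArg Subtype.val hx
    calc χ (h x) = G χ x := (DFunLike.congr_fun (hG χ) x).symm
      _ = ∑ i, e.symm i χ (fiberSum R c x i) :=
          apply_eq_sum_fiberSum c (G χ) (fun i => e.symm i χ)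
            (fun j a => by rw [Equiv.symm_apply_apply]; rfl) x
      _ = 0 := by simp [hpx]
  obtain ⟨g, hg⟩ := LinearMap.exists_comp_eq_of_surjective_of_ker_le
    ((fiberSum R c).submoduleMap_surjective C) hker
  exact ⟨fiberSum R c, g, fun x => LinearMap.congr_fun hg x⟩

/-- For a finite ring `R` and finite `R`-modules `A`, `E`, there
is a positive integer `ℓ` such that every `R`-linear map `h : C → E` defined on
a submodule `C ≤ Aⁿ` factors as `h = k ∘ p` with `p : Aⁿ →ₗ A^ℓ` and
`k : p(C) →ₗ E`. -/
theorem stmt_2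
    (R : Type*) [Ring R] [Fintype R]
    (A : Type*) [AddCommGroup A] [Module R A] [Fintype A]
    (E : Type*) [AddCommGroup E] [Module R E] [Fintype E] :
    ∃ ℓ : ℕ, 0 < ℓ ∧
      ∀ (n : ℕ), 0 < n →
        ∀ (C : Submodule R (Fin n → A)) (h : C →ₗ[R] E),
          ∃ (p : (Fin n → A) →ₗ[R] (Fin ℓ → A))
            (g : (C.map p) →ₗ[R] E),
            ∀ x : C, g ⟨p x, Submodule.mem_map_of_mem x.2⟩ = h x :=
  stmt_2_general R A E
end

section
/- Let R be a finite unital ring and let A be a finite R-module. Then there exists a positive integer ℓ such that for every positive integer n, all submodules B ⊆ C of A^n, and every R-linear map h : B → A that admits an R-linear extension h' : C → A (with h'(x) = h(x) for all x ∈ B), there exist an R-linear map p : A^n → A^ℓ and an R-linear map k : p(C) → A such that k(p(x)) = h(x) for all x ∈ B. -/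
/-!
`A` embeds into the finite module `Q = (Hom_ℤ(R, ℚ/ℤ))^A`, which is injective by Baer's criterion.
Extend `e ∘ h'` (with `e : A ↪ Q`) from `C` to `H : Aⁿ → Q`. Then `H x = ∑ᵢ Hᵢ (xᵢ)` with each
`Hᵢ` in the finite set `Hom_R(A, Q)`, of size `ℓ`; adding up the coordinates `xᵢ` that share the
same `Hᵢ` gives `p : Aⁿ → A^ℓ` through which `H` factors. Hence `p c = 0` forces `e (h' c) = 0`
for `c ∈ C`, and `h'` descends to `p(C)`.
-/

open Module

/-- `Hom_ℤ(R, ℚ/ℤ)`, the character module of `R` as a right `R`-module; it is a left `R`-module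
via `(r • c) s = c (s * r)`. Mathlib's `CharacterModule` only carries this action for commutative
rings. -/
def RightCharacterModule (R : Type*) [Ring R] : Type _ := R →+ AddCircle (1 : ℚ)

namespace RightCharacterModule

variable {R : Type*} [Ring R]

instance : AddCommGroup (RightCharacterModule R) :=
  inferInstanceAs (AddCommGroup (R →+ AddCircle (1 : ℚ)))

instance : FunLike (RightCharacterModule R) R (AddCircle (1 : ℚ)) :=
  inferInstanceAs (FunLike (R →+ AddCircle (1 : ℚ)) R (AddCircle (1 : ℚ)))

instance : AddMonoidHomClass (RightCharacterModule R) R (AddCircle (1 : ℚ)) :=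
  inferInstanceAs (AddMonoidHomClass (R →+ AddCircle (1 : ℚ)) R (AddCircle (1 : ℚ)))

@[ext] lemma ext {c c' : RightCharacterModule R} (h : ∀ s, c s = c' s) : c = c' :=
  DFunLike.ext _ _ h

@[simp] lemma zero_apply (s : R) : (0 : RightCharacterModule R) s = 0 := rfl

@[simp] lemma add_apply (c c' : RightCharacterModule R) (s : R) : (c + c') s = c s + c' s := rfl

def ofAddMonoidHom : (R →+ AddCircle (1 : ℚ)) ≃ RightCharacterModule R := Equiv.refl _

@[simp] lemma ofAddMonoidHom_apply (f : R →+ AddCircle (1 : ℚ)) (s : R) :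
    ofAddMonoidHom f s = f s :=
  rfl

instance : SMul R (RightCharacterModule R) :=
  ⟨fun r c => ofAddMonoidHom ((c : R →+ AddCircle (1 : ℚ)).comp (AddMonoidHom.mulRight r))⟩

@[simp] lemma smul_apply (r : R) (c : RightCharacterModule R) (s : R) : (r • c) s = c (s * r) :=
  rfl

instance : Module R (RightCharacterModule R) where
  one_smul c := ext fun s => by simp
  mul_smul r r' c := ext fun s => by simp [mul_assoc]
  smul_zero r := ext fun s => rfl
  smul_add r c c' := ext fun s => rfl
  add_smul r r' c := ext fun s => by simp [mul_add]
  zero_smul c := ext fun s => by simp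

variable {A : Type*} [AddCommGroup A] [Module R A]

def lift (χ : A →+ AddCircle (1 : ℚ)) : A →ₗ[R] RightCharacterModule R where
  toFun x := ofAddMonoidHom <| χ.comp (LinearMap.toSpanSingleton R A x).toAddMonoidHom
  map_add' x y := ext fun s => by simp
  map_smul' r x := ext fun s => by simp [mul_smul]

@[simp] lemma lift_apply (χ : A →+ AddCircle (1 : ℚ)) (x : A) (s : R) : lift χ x s = χ (s • x) :=
  rfl

theorem baer : Baer R (RightCharacterModule R) := by
  intro I g
  let g₁ : I →+ AddCircle (1 : ℚ) :=
    AddMonoidHom.mk' (fun x => g x 1) fun x y => by simp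
  obtain ⟨ψ, hψ⟩ := (Baer.of_divisible (AddCircle (1 : ℚ))).extension_property_addMonoidHom
    I.subtype.toAddMonoidHom Subtype.val_injective g₁
  refine ⟨lift ψ, fun x hx => ext fun s => ?_⟩
  calc ψ (s * x) = g₁ (s • ⟨x, hx⟩) := DFunLike.congr_fun hψ (s • ⟨x, hx⟩)
    _ = g ⟨x, hx⟩ s := by
      show g (s • ⟨x, hx⟩) 1 = _
      rw [map_smul, smul_apply, one_mul]

instance : Module.Injective R (RightCharacterModule R) := baer.injective

instance [Finite R] : Finite (RightCharacterModule R) := by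
  have := (AddCircle.finite_torsion (1 : ℚ) (Nat.card_pos (α := R))).to_subtype
  refine Finite.of_injective (fun c r => (⟨c r, ?_⟩ : {x : AddCircle (1 : ℚ) | Nat.card R • x = 0}))
    fun c c' hcc' => ext fun s => congr_arg Subtype.val (congr_fun hcc' s)
  rw [Set.mem_ofPred_eq, ← map_nsmul, card_nsmul_eq_zero', map_zero]

end RightCharacterModule

theorem RightCharacterModule.exists_injective_linearMap_pi (R : Type*) [Ring R] (A : Type*)
    [AddCommGroup A] [Module R A] :
    ∃ e : A →ₗ[R] (A → RightCharacterModule R), Function.Injective e := by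
  have : ∀ a : A, ∃ χ : A →+ AddCircle (1 : ℚ), a ≠ 0 → χ a ≠ 0 := fun a => by
    by_cases ha : a = 0
    · exact ⟨0, fun h => (h ha).elim⟩
    · obtain ⟨χ, hχ⟩ := CharacterModule.exists_character_apply_ne_zero_of_ne_zero ha
      exact ⟨χ, fun _ => hχ⟩
  choose χ hχ using this
  refine ⟨LinearMap.pi fun a => RightCharacterModule.lift (χ a), ?_⟩
  refine (injective_iff_map_eq_zero _).2 fun a ha => not_not.1 fun ha' => hχ a ha' ?_
  simpa using congr_arg (· a 1) ha

section

variable {R : Type*} [Ring R] {M N P : Type*} [AddCommGroup M] [Module R M]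
  [AddCommGroup N] [Module R N] [AddCommGroup P] [Module R P]

variable (R M) in
def LinearMap.sumFibers {ι κ : Type*} [Fintype ι] [DecidableEq κ] (σ : ι → κ) :
    (ι → M) →ₗ[R] (κ → M) :=
  LinearMap.pi (φ := fun _ : κ => M) fun j =>
    ∑ i with σ i = j, LinearMap.proj (R := R) (φ := fun _ => M) i

@[simp] lemma LinearMap.sumFibers_apply {ι κ : Type*} [Fintype ι] [DecidableEq κ] (σ : ι → κ)
    (x : ι → M) (j : κ) : sumFibers R M σ x j = ∑ i with σ i = j, x i := by
  simp [sumFibers]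

lemma LinearMap.sum_apply_sumFibers {ι κ : Type*} [Fintype ι] [Fintype κ] [DecidableEq κ]
    (σ : ι → κ) (φ : κ → M →ₗ[R] N) (x : ι → M) :
    ∑ j, φ j (sumFibers R M σ x j) = ∑ i, φ (σ i) (x i) := by
  simp only [sumFibers_apply, map_sum]
  rw [← Finset.sum_fiberwise Finset.univ σ]
  exact Finset.sum_congr rfl fun j _ => Finset.sum_congr rfl fun i hi => by
    rw [(Finset.mem_filter.1 hi).2]

theorem LinearMap.exists_comp_sumFibers_eq {ι : Type*} [Fintype ι] [Finite (M →ₗ[R] N)]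
    (H : (ι → M) →ₗ[R] N) :
    ∃ (σ : ι → Fin (Nat.card (M →ₗ[R] N))) (q : (Fin (Nat.card (M →ₗ[R] N)) → M) →ₗ[R] N),
      q ∘ₗ sumFibers R M σ = H := by
  classical
  let ε := (Finite.equivFin (M →ₗ[R] N)).symm
  let σ i := ε.symm (H ∘ₗ LinearMap.single R (fun _ => M) i)
  refine ⟨σ, ∑ j, ε j ∘ₗ LinearMap.proj (R := R) (φ := fun _ => M) j,
    LinearMap.ext fun x => ?_⟩
  calc _ = ∑ j, ε j (sumFibers R M σ x j) := by simp
    _ = ∑ i, H (Pi.single i (x i)) := by rw [sum_apply_sumFibers]; simp [σ]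
    _ = H x := by rw [← map_sum, Finset.univ_sum_single]

theorem Submodule.exists_factor_through_map {C : Submodule R M} (p : M →ₗ[R] N)
    (f : C →ₗ[R] P) (hf : ∀ c : C, p c = 0 → f c = 0) :
    ∃ g : C.map p →ₗ[R] P, ∀ c : C, g ⟨p c, mem_map_of_mem c.2⟩ = f c := by
  let s := p.submoduleMap C
  have hs : LinearMap.ker s ≤ LinearMap.ker f := fun c hc =>
    hf c (congr_arg Subtype.val (LinearMap.mem_ker.1 hc))
  refine ⟨(LinearMap.ker s).liftQ f hs ∘ₗ (s.quotKerEquivOfSurjective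
    (p.submoduleMap_surjective C)).symm.toLinearMap, fun c => ?_⟩
  change (LinearMap.ker s).liftQ f hs ((s.quotKerEquivOfSurjective _).symm (s c)) = f c
  rw [LinearMap.quotKerEquivOfSurjective_symm_apply, Submodule.liftQ_apply]

end

/-- For a finite ring `R` and finite `R`-module `A`, there is a
positive integer `ℓ` such that for all submodules `B ≤ C ≤ Aⁿ` and every
`R`-linear map `h : B → A` admitting an `R`-linear extension `h' : C → A`,
there are `p : Aⁿ →ₗ A^ℓ` and `k : p(C) →ₗ A` with `k(p(x)) = h(x)` for all
`x ∈ B`. -/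
theorem stmt_3
    (R : Type*) [Ring R] [Fintype R]
    (A : Type*) [AddCommGroup A] [Module R A] [Fintype A] :
    ∃ ℓ : ℕ, 0 < ℓ ∧
      ∀ (n : ℕ), 0 < n →
        ∀ (B C : Submodule R (Fin n → A)) (hBC : B ≤ C)
          (h : B →ₗ[R] A) (h' : C →ₗ[R] A),
          (∀ (x : Fin n → A) (hx : x ∈ B), h' ⟨x, hBC hx⟩ = h ⟨x, hx⟩) →
          ∃ (p : (Fin n → A) →ₗ[R] (Fin ℓ → A))
            (g : (C.map p) →ₗ[R] A),
            ∀ (x : Fin n → A) (hx : x ∈ B),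
              g ⟨p x, Submodule.mem_map_of_mem (hBC hx)⟩ = h ⟨x, hx⟩ := by
  obtain ⟨e, he⟩ := RightCharacterModule.exists_injective_linearMap_pi R A
  have : Finite (A →ₗ[R] (A → RightCharacterModule R)) :=
    Finite.of_injective (β := A → A → RightCharacterModule R) _ DFunLike.coe_injective
  refine ⟨Nat.card (A →ₗ[R] (A → RightCharacterModule R)), Nat.card_pos,
    fun n _ B C hBC h h' hh' => ?_⟩
  obtain ⟨H, hH⟩ := Module.Injective.extension_property R _ _ _ C.subtype C.injective_subtype
    (e ∘ₗ h')
  obtain ⟨σ, q, rfl⟩ := LinearMap.exists_comp_sumFibers_eq H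
  obtain ⟨g, hg⟩ := Submodule.exists_factor_through_map (LinearMap.sumFibers R A σ) h'
    fun c hc => he <| by simpa [hc] using (DFunLike.congr_fun hH c).symm
  exact ⟨_, g, fun x hx => (hg ⟨x, hBC hx⟩).trans (hh' x hx)⟩
end

section
/- Let E be a finite abelian group with |E| = p₁^{α₁} ⋯ p_k^{α_k}, where p₁, …, p_k are distinct primes. Then the number of subgroups of E is at most p₁^{α₁²} ⋯ p_k^{α_k²}. -/
/-- A subgroup of order `pp ^ n` (with `pp` prime) is generated by `n` elements. -/
lemma gen_of_card_pow {G : Type*} [Group G] [Finite G] {pp : ℕ} (hpp : pp.Prime) :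
    ∀ (n : ℕ) (H : Subgroup G), Nat.card H = pp ^ n →
      ∃ f : Fin n → G, Subgroup.closure (Set.range f) = H := by
  intro n
  induction n with
  | zero =>
    intro H hH
    refine ⟨fun i => 1, ?_⟩
    have hb : H = ⊥ := Subgroup.eq_bot_of_card_eq H (by simpa using hH)
    rw [hb, Set.range_eq_empty, Subgroup.closure_empty]
  | succ n ih =>
    intro H hH
    haveI : Fact pp.Prime := ⟨hpp⟩
    obtain ⟨K, hK⟩ := Sylow.exists_subgroup_card_pow_prime (G := H) pp
      (n := n) (by rw [hH]; exact pow_dvd_pow pp n.le_succ)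
    set N : Subgroup G := K.map H.subtype with hNdef
    have hcardN : Nat.card N = pp ^ n := by
      rw [← hK]
      exact (Nat.card_congr (K.equivMapOfInjective H.subtype H.subtype_injective).toEquiv).symm
    have hNH : N ≤ H := Subgroup.map_subtype_le K
    have hne : ¬ H ≤ N := by
      intro hle
      have hd := Subgroup.card_dvd_of_le hle
      rw [hH, hcardN] at hd
      exact absurd (Nat.le_of_dvd (pow_pos hpp.pos n) hd)
        (Nat.not_le.2 (Nat.pow_lt_pow_succ hpp.one_lt))
    obtain ⟨x, hxH, hxN⟩ := SetLike.not_le_iff_exists.mp hne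
    obtain ⟨f, hf⟩ := ih N hcardN
    refine ⟨Fin.cons x f, ?_⟩
    rw [Fin.range_cons]
    set C := Subgroup.closure (insert x (Set.range f)) with hCdef
    have hrfN : Set.range f ⊆ (N : Set G) := hf ▸ Subgroup.subset_closure
    have hCH : C ≤ H := by
      rw [hCdef]
      refine (Subgroup.closure_le H).mpr ?_
      exact Set.insert_subset hxH (hrfN.trans hNH)
    have hNC : N ≤ C := by
      rw [← hf, hCdef]
      exact Subgroup.closure_mono (Set.subset_insert _ _)
    have hxC : x ∈ C := Subgroup.subset_closure (Set.mem_insert x _)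
    obtain ⟨j, hjle, hcj⟩ := (Nat.dvd_prime_pow hpp).mp
      (hH ▸ Subgroup.card_dvd_of_le hCH)
    have hnj : n ≤ j := (Nat.pow_dvd_pow_iff_le_right hpp.one_lt).mp
      (hcj ▸ hcardN ▸ Subgroup.card_dvd_of_le hNC)
    rcases eq_or_lt_of_le hnj with heq | hlt
    · exfalso
      have : N = C := Subgroup.eq_of_le_of_card_ge hNC (by rw [hcj, hcardN, heq])
      exact hxN (this ▸ hxC)
    · have hj : j = n + 1 := le_antisymm hjle hlt
      exact Subgroup.eq_of_le_of_card_ge hCH (by rw [hcj, hH, hj])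

/-- A group of order `pp ^ a` has at most `pp ^ (a ^ 2)` subgroups. -/
lemma card_subgroup_le_of_card_pow {P : Type*} [Group P] [Finite P] {pp a : ℕ}
    (hpp : pp.Prime) (hc : Nat.card P = pp ^ a) :
    Nat.card (Subgroup P) ≤ pp ^ (a ^ 2) := by
  have key : ∀ H : Subgroup P, ∃ f : Fin a → P, Subgroup.closure (Set.range f) = H := by
    intro H
    obtain ⟨b, hble, hcb⟩ := (Nat.dvd_prime_pow hpp).mp
      (hc ▸ Subgroup.card_subgroup_dvd_card H)
    obtain ⟨f, hf⟩ := gen_of_card_pow hpp b H hcb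
    refine ⟨fun i => if h : (i : ℕ) < b then f ⟨i, h⟩ else 1, ?_⟩
    rw [← hf]
    apply le_antisymm
    · refine (Subgroup.closure_le _).mpr ?_
      rintro _ ⟨i, rfl⟩
      by_cases h : (i : ℕ) < b
      · simp only [dif_pos h]
        exact Subgroup.subset_closure ⟨⟨i, h⟩, rfl⟩
      · simp only [dif_neg h]
        exact Subgroup.one_mem _
    · refine (Subgroup.closure_le _).mpr ?_
      rintro _ ⟨j, rfl⟩
      refine Subgroup.subset_closure ⟨⟨(j : ℕ), lt_of_lt_of_le j.2 hble⟩, ?_⟩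
      simp [j.2]
  choose Φ hΦ using key
  have hinj : Function.Injective Φ := fun H K h => by rw [← hΦ H, ← hΦ K, h]
  calc Nat.card (Subgroup P) ≤ Nat.card (Fin a → P) :=
        Nat.card_le_card_of_injective Φ hinj
    _ = pp ^ (a ^ 2) := by
        rw [Nat.card_fun, hc, Nat.card_eq_fintype_card, Fintype.card_fin, ← pow_mul, ← sq]

/-- A finite abelian group `E` with `|E| = ∏ pᵢ^{αᵢ}` (distinct
primes `pᵢ`) has at most `∏ pᵢ^{αᵢ²}` subgroups. -/
theorem stmt_6
    (E : Type*) [CommGroup E] [Fintype E]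
    (k : ℕ) (p : Fin k → ℕ) (α : Fin k → ℕ)
    (hp : ∀ i, (p i).Prime) (hpinj : Function.Injective p)
    (hcard : Fintype.card E = ∏ i, p i ^ α i) :
    Nat.card (Subgroup E) ≤ ∏ i, p i ^ (α i ^ 2) := by
  classical
  have inst : ∀ i, Fact (p i).Prime := fun i => ⟨hp i⟩
  have hcard' : Nat.card E = ∏ i, p i ^ α i := by rw [Nat.card_eq_fintype_card, hcard]
  -- the unique Sylow subgroups
  let S : ∀ i, Sylow (p i) E := fun i => by haveI := inst i; exact Classical.arbitrary _
  let P : Fin k → Subgroup E := fun i => (S i : Subgroup E)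
  -- factorization of the group order
  have hα : ∀ j, (Nat.card E).factorization (p j) = α j := by
    intro j
    rw [hcard', Nat.factorization_prod (fun i _ => pow_ne_zero _ (hp i).pos.ne')]
    rw [Finsupp.finset_sum_apply]
    rw [Finset.sum_eq_single j]
    · rw [(hp j).factorization_pow, Finsupp.single_apply, if_pos rfl]
    · intro i _ hij
      rw [(hp i).factorization_pow, Finsupp.single_apply,
        if_neg (fun h => hij (hpinj h))]
    · intro h; exact absurd (Finset.mem_univ j) h
  have hcardP : ∀ i, Nat.card (P i) = p i ^ α i := by
    intro i
    haveI := inst i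
    rw [show (Nat.card (P i)) = Nat.card (S i) from rfl, Sylow.card_eq_multiplicity, hα]
  -- every subgroup is the supremum of its intersections with the Sylow subgroups
  have hrecover : ∀ H : Subgroup E, H = ⨆ i, (H ⊓ P i) := by
    intro H
    set T : Subgroup E := ⨆ i, (H ⊓ P i) with hT
    have hTH : T ≤ H := iSup_le fun i => inf_le_left
    have hdvd : ∀ i, p i ^ ((Nat.card H).factorization (p i)) ∣ Nat.card T := by
      intro i
      haveI := inst i
      obtain ⟨Q⟩ : Nonempty (Sylow (p i) H) := inferInstance
      have hQcard : Nat.card Q = p i ^ ((Nat.card H).factorization (p i)) :=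
        Sylow.card_eq_multiplicity Q
      set Qm : Subgroup E := (Q : Subgroup H).map H.subtype with hQm
      have hQmcard : Nat.card Qm = p i ^ ((Nat.card H).factorization (p i)) := by
        rw [← hQcard]
        exact (Nat.card_congr ((Q : Subgroup H).equivMapOfInjective H.subtype
          H.subtype_injective).toEquiv).symm
      have hQmp : IsPGroup (p i) Qm := (Q.isPGroup').map H.subtype
      obtain ⟨R, hR⟩ := hQmp.exists_le_sylow
      haveI : Unique (Sylow (p i) E) := Sylow.unique_of_normal (S i) inferInstance
      have hRS : R = S i := Subsingleton.elim _ _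
      have hQmP : Qm ≤ P i := by show Qm ≤ (S i : Subgroup E); rw [← hRS]; exact hR
      have hQmH : Qm ≤ H := Subgroup.map_subtype_le _
      have : Qm ≤ T := le_trans (le_inf hQmH hQmP) (le_iSup (fun i => H ⊓ P i) i)
      rw [← hQmcard]
      exact Subgroup.card_dvd_of_le this
    have hHT : Nat.card H ∣ Nat.card T := by
      rw [← Nat.factorization_le_iff_dvd Nat.card_pos.ne' Nat.card_pos.ne',
        Finsupp.le_def]
      intro q
      by_cases hq : q ∈ (Nat.card H).factorization.support
      · have hqp : q.Prime := Nat.prime_of_mem_primeFactors hq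
        have hqdvd : q ∣ Nat.card H := Nat.dvd_of_mem_primeFactors hq
        have hqE : q ∣ ∏ i, p i ^ α i :=
          hcard' ▸ (hqdvd.trans (Subgroup.card_subgroup_dvd_card H))
        obtain ⟨i, -, hi⟩ := hqp.prime.exists_mem_finset_dvd hqE
        obtain rfl : q = p i :=
          (Nat.prime_dvd_prime_iff_eq hqp (hp i)).mp (hqp.dvd_of_dvd_pow hi)
        exact ((hp i).pow_dvd_iff_le_factorization Nat.card_pos.ne').mp (hdvd i)
      · have h0 : (Nat.card H).factorization q = 0 :=
          Finsupp.notMem_support_iff.mp hq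
        rw [Nat.card_eq_fintype_card] at h0
        simp [h0]
    exact (Subgroup.eq_of_le_of_card_ge hTH
      (Nat.le_of_dvd Nat.card_pos hHT)).symm
  -- the injection into the product of subgroup lattices of the Sylow subgroups
  let Φ : Subgroup E → ∀ i, Subgroup (P i) := fun H i => (H ⊓ P i).subgroupOf (P i)
  have hΦinj : Function.Injective Φ := by
    intro H K h
    have hmap : ∀ (H : Subgroup E) i, (Φ H i).map (P i).subtype = H ⊓ P i := by
      intro H i
      rw [show Φ H i = (H ⊓ P i).subgroupOf (P i) from rfl,
        Subgroup.subgroupOf_map_subtype, inf_assoc, inf_idem]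
    rw [hrecover H, hrecover K]
    refine iSup_congr fun i => ?_
    rw [← hmap H i, ← hmap K i, h]
  calc Nat.card (Subgroup E) ≤ Nat.card (∀ i, Subgroup (P i)) :=
        Nat.card_le_card_of_injective Φ hΦinj
    _ = ∏ i, Nat.card (Subgroup (P i)) := Nat.card_pi
    _ ≤ ∏ i, p i ^ (α i ^ 2) := by
        refine Finset.prod_le_prod (fun i _ => Nat.zero_le _) (fun i _ => ?_)
        exact card_subgroup_le_of_card_pow (hp i) (hcardP i)
end

section
/- Let E and F be finite abelian groups with |E| = p₁^{α₁} ⋯ p_k^{α_k} and |F| = p₁^{β₁} ⋯ p_k^{β_k}, where p₁, …, p_k are distinct primes and the exponents αᵢ, βᵢ are nonnegative integers. Then the number of group homomorphisms from F to E divides p₁^{α₁β₁} ⋯ p_k^{α_kβ_k}. -/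
/-!
For a prime `ℓ`, a Sylow `ℓ`-subgroup of `Hom(F, E)` embeds by restriction into
`Hom(F_ℓ, E_ℓ)`, the homomorphisms between the `ℓ`-primary components. Peeling off cyclic
subgroups one at a time shows that `|Hom(G, A)|` divides `|A| ^ b` whenever `|G|` divides
`q ^ b`, so `|Hom(F_ℓ, E_ℓ)|` divides `ℓ ^ (a * b)`, where `ℓ ^ a ‖ |E|` and `ℓ ^ b ‖ |F|`.
-/

open CommGroup

instance MonoidHom.finite {G A : Type*} [MulOneClass G] [MulOneClass A] [Finite G] [Finite A] :
    Finite (G →* A) :=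
  FunLike.finite _

theorem Nat.card_monoidHom_of_subsingleton {G A : Type*} [MulOneClass G] [MulOneClass A]
    [Subsingleton G] : Nat.card (G →* A) = 1 :=
  have : Subsingleton (G →* A) :=
    ⟨fun f g => MonoidHom.ext fun x => by rw [Subsingleton.elim x 1, map_one, map_one]⟩
  Nat.card_unique

section HomCount

variable {G A : Type*} [CommGroup G] [CommGroup A]

/-- Homomorphisms killing `g` are those factoring through `G ⧸ ⟨g⟩`, and the rest is
counted by the possible images of `g`. -/
theorem card_monoidHom_dvd_card_quotient_zpowers_mul [Finite A] (g : G) :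
    Nat.card (G →* A) ∣ Nat.card (G ⧸ Subgroup.zpowers g →* A) * Nat.card A := by
  set ev : (G →* A) →* A := MonoidHom.eval g
  set π := QuotientGroup.mk' (Subgroup.zpowers g)
  have hinj : Function.Injective (MonoidHom.compHom' π (P := A)) := fun φ ψ h =>
    MonoidHom.ext fun x => QuotientGroup.induction_on x fun y => DFunLike.congr_fun h y
  have hker : ev.ker = (MonoidHom.compHom' π).range := by
    ext f
    constructor
    · intro hf
      refine ⟨QuotientGroup.lift _ f ?_, MonoidHom.ext fun y => rfl⟩
      rw [Subgroup.zpowers_le]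
      exact hf
    · rintro ⟨φ, rfl⟩
      show φ (π g) = 1
      rw [QuotientGroup.mk'_apply, (QuotientGroup.eq_one_iff g).mpr (Subgroup.mem_zpowers g),
        map_one]
  calc Nat.card (G →* A) = Nat.card ev.ker * Nat.card ev.range := by
        rw [← Subgroup.index_ker, Subgroup.card_mul_index]
    _ = Nat.card (G ⧸ Subgroup.zpowers g →* A) * Nat.card ev.range := by
        rw [hker, Nat.card_congr (MonoidHom.ofInjective hinj).toEquiv.symm]
    _ ∣ Nat.card (G ⧸ Subgroup.zpowers g →* A) * Nat.card A :=
        mul_dvd_mul_left _ (Subgroup.card_subgroup_dvd_card _)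

theorem card_monoidHom_dvd_card_pow [Finite G] [Finite A] {q b : ℕ} (hq : q.Prime)
    (hG : Nat.card G ∣ q ^ b) : Nat.card (G →* A) ∣ Nat.card A ^ b := by
  induction b generalizing G with
  | zero =>
    have : Subsingleton G := (Nat.card_eq_one_iff_unique.mp (Nat.dvd_one.mp hG)).1
    rw [Nat.card_monoidHom_of_subsingleton, pow_zero]
  | succ b ih =>
    rcases subsingleton_or_nontrivial G with _ | _
    · rw [Nat.card_monoidHom_of_subsingleton]
      exact one_dvd _
    have : Fact q.Prime := ⟨hq⟩
    obtain ⟨m, -, hm⟩ := (Nat.dvd_prime_pow hq).mp hG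
    have hm0 : m ≠ 0 := by
      rintro rfl
      exact Finite.one_lt_card.ne' hm
    obtain ⟨g, hg⟩ := exists_prime_orderOf_dvd_card' (G := G) q (hm ▸ dvd_pow_self q hm0)
    have hquot : Nat.card (G ⧸ Subgroup.zpowers g) ∣ q ^ b := by
      refine Nat.dvd_of_mul_dvd_mul_right hq.pos ?_
      calc Nat.card (G ⧸ Subgroup.zpowers g) * q = Nat.card G := by
            rw [← hg, ← Nat.card_zpowers, ← Subgroup.card_eq_card_quotient_mul_card_subgroup]
        _ ∣ q ^ b * q := hG
    calc Nat.card (G →* A) ∣ Nat.card (G ⧸ Subgroup.zpowers g →* A) * Nat.card A :=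
          card_monoidHom_dvd_card_quotient_zpowers_mul g
      _ ∣ Nat.card A ^ b * Nat.card A := mul_dvd_mul_right (ih hquot) _
      _ = Nat.card A ^ (b + 1) := (pow_succ _ _).symm

end HomCount

section PrimaryComponent

variable {G A : Type*} [CommGroup G] [CommGroup A] {ℓ : ℕ}

theorem map_mem_primaryComponent (f : G →* A) {x : G} (hx : x ∈ primaryComponent G ℓ) :
    f x ∈ primaryComponent A ℓ := by
  obtain ⟨k, hk⟩ := mem_primaryComponent.mp hx
  exact mem_primaryComponent.mpr ⟨k, by rw [← map_pow, hk, map_one]⟩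

theorem card_primaryComponent_dvd [Fact ℓ.Prime] [Finite G] :
    Nat.card (primaryComponent G ℓ) ∣ ℓ ^ (Nat.card G).factorization ℓ := by
  obtain ⟨n, hn⟩ := IsPGroup.iff_card.mp (primaryComponent.isPGroup (G := G) (p := ℓ))
  have hdvd : ℓ ^ n ∣ Nat.card G := hn ▸ Subgroup.card_subgroup_dvd_card _
  rw [hn]
  exact pow_dvd_pow ℓ
    (((Fact.out : ℓ.Prime).pow_dvd_iff_le_factorization Nat.card_pos.ne').mp hdvd)

variable (ℓ) in
def MonoidHom.restrictPrimaryComponent (f : G →* A) :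
    primaryComponent G ℓ →* primaryComponent A ℓ :=
  (f.comp (primaryComponent G ℓ).subtype).codRestrict _ fun x => map_mem_primaryComponent f x.2

/-- Write `|G| = ℓ^b m` with `ℓ ∤ m`: every `y ^ m` lies in the `ℓ`-primary component, so
`u y` is killed both by `m` and by `ℓ ^ n`. -/
theorem MonoidHom.eq_one_of_pow_eq_one_of_primaryComponent_le_ker [Fact ℓ.Prime] [Finite G]
    {u : G →* A} {n : ℕ} (hu : u ^ ℓ ^ n = 1) (hker : primaryComponent G ℓ ≤ u.ker) :
    u = 1 := by
  ext y
  set m := ordCompl[ℓ] (Nat.card G)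
  have hym : y ^ m ∈ primaryComponent G ℓ := mem_primaryComponent.mpr
    ⟨(Nat.card G).factorization ℓ, by
      rw [← pow_mul, mul_comm, Nat.ordProj_mul_ordCompl_eq_self, pow_card_eq_one']⟩
  have hcop : (ℓ ^ n).Coprime m :=
    (Nat.coprime_ordCompl Fact.out Nat.card_pos.ne').pow_left n
  refine (pow_eq_one_iff_of_coprime hcop).mp ⟨DFunLike.congr_fun hu y, ?_⟩
  rw [← map_pow]
  exact hker hym

theorem MonoidHom.injective_restrictPrimaryComponent_of_isPGroup [Fact ℓ.Prime] [Finite G]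
    {Q : Subgroup (G →* A)} (hQ : IsPGroup ℓ Q) :
    Function.Injective fun f : Q => (f : G →* A).restrictPrimaryComponent ℓ := by
  intro f g hfg
  obtain ⟨n, hn⟩ := hQ (f * g⁻¹)
  refine Subtype.ext (mul_inv_eq_one.mp (eq_one_of_pow_eq_one_of_primaryComponent_le_ker
    (congrArg Subtype.val hn) fun x hx => ?_))
  have hfgx := congrArg Subtype.val (DFunLike.congr_fun hfg ⟨x, hx⟩)
  exact mul_inv_eq_one.mpr hfgx

theorem factorization_card_monoidHom_le [Finite G] [Finite A] (ℓ : ℕ) :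
    (Nat.card (G →* A)).factorization ℓ ≤
      (Nat.card A).factorization ℓ * (Nat.card G).factorization ℓ := by
  by_cases hℓ : ℓ.Prime
  swap
  · simp [Nat.factorization_eq_zero_of_not_prime _ hℓ]
  have : Fact ℓ.Prime := ⟨hℓ⟩
  set a := (Nat.card A).factorization ℓ
  set b := (Nat.card G).factorization ℓ
  let Q : Sylow ℓ (G →* A) := default
  have hhom : Nat.card (primaryComponent G ℓ →* primaryComponent A ℓ) ∣ ℓ ^ (a * b) :=
    calc _ ∣ Nat.card (primaryComponent A ℓ) ^ b :=
          card_monoidHom_dvd_card_pow hℓ card_primaryComponent_dvd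
      _ ∣ (ℓ ^ a) ^ b := pow_dvd_pow_of_dvd card_primaryComponent_dvd b
      _ = ℓ ^ (a * b) := (pow_mul ℓ a b).symm
  have hQ : ℓ ^ (Nat.card (G →* A)).factorization ℓ ≤ ℓ ^ (a * b) :=
    calc ℓ ^ (Nat.card (G →* A)).factorization ℓ = Nat.card Q := Q.card_eq_multiplicity.symm
      _ ≤ Nat.card (primaryComponent G ℓ →* primaryComponent A ℓ) :=
        Nat.card_le_card_of_injective _
          (MonoidHom.injective_restrictPrimaryComponent_of_isPGroup Q.isPGroup')
      _ ≤ ℓ ^ (a * b) := Nat.le_of_dvd (pow_pos hℓ.pos _) hhom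
  exact (Nat.pow_le_pow_iff_right hℓ.one_lt).mp hQ

end PrimaryComponent

section Factorization

variable {ι : Type*} [Fintype ι] {p : ι → ℕ} {γ : ι → ℕ}

theorem Nat.factorization_prod_pow_apply_self (hp : ∀ i, (p i).Prime)
    (hpinj : Function.Injective p) (i : ι) :
    (∏ j, p j ^ γ j).factorization (p i) = γ i := by
  rw [Nat.factorization_prod fun j _ => pow_ne_zero _ (hp j).ne_zero, Finset.sum_apply',
    Finset.sum_eq_single i]
  · rw [(hp i).factorization_pow, Finsupp.single_eq_same]
  · intro j _ hj
    rw [(hp j).factorization_pow, Finsupp.single_eq_of_ne' fun h => hj (hpinj h)]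
  · simp

theorem Nat.factorization_prod_pow_apply_of_notMem_range (hp : ∀ i, (p i).Prime) {ℓ : ℕ}
    (hℓ : ℓ ∉ Set.range p) :
    (∏ j, p j ^ γ j).factorization ℓ = 0 := by
  rw [Nat.factorization_prod fun j _ => pow_ne_zero _ (hp j).ne_zero, Finset.sum_apply']
  refine Finset.sum_eq_zero fun j _ => ?_
  rw [(hp j).factorization_pow, Finsupp.single_eq_of_ne' fun h => hℓ ⟨j, h⟩]

end Factorization

/-- For finite abelian groups `E`, `F` with `|E| = ∏ pᵢ^{αᵢ}` and
`|F| = ∏ pᵢ^{βᵢ}` (distinct primes `pᵢ`, nonnegative exponents), the number of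
group homomorphisms `F → E` divides `∏ pᵢ^{αᵢβᵢ}`. -/
theorem stmt_7
    (E : Type*) [CommGroup E] [Fintype E]
    (F : Type*) [CommGroup F] [Fintype F]
    (k : ℕ) (p : Fin k → ℕ) (α β : Fin k → ℕ)
    (hp : ∀ i, (p i).Prime) (hpinj : Function.Injective p)
    (hE : Fintype.card E = ∏ i, p i ^ α i)
    (hF : Fintype.card F = ∏ i, p i ^ β i) :
    Nat.card (F →* E) ∣ ∏ i, p i ^ (α i * β i) := by
  rw [← Nat.factorization_le_iff_dvd Nat.card_pos.ne'
    (Finset.prod_ne_zero_iff.mpr fun i _ => pow_ne_zero _ (hp i).ne_zero)]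
  intro ℓ
  refine (factorization_card_monoidHom_le ℓ).trans (le_of_eq ?_)
  rw [Nat.card_eq_fintype_card, Nat.card_eq_fintype_card, hE, hF]
  by_cases hℓ : ℓ ∈ Set.range p
  · obtain ⟨i, rfl⟩ := hℓ
    simp only [Nat.factorization_prod_pow_apply_self hp hpinj]
  · simp only [Nat.factorization_prod_pow_apply_of_notMem_range hp hℓ, zero_mul]
end

section
/- Let R be a finite unital ring, let M be an R-module, and let n be a positive integer. If every finitely generated submodule of M can be generated by n elements, then M is finite. -/
lemma card_bound_aux
    (R : Type*) [Ring R] [Fintype R]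
    (M : Type*) [AddCommGroup M] [Module R M]
    (n : ℕ)
    (s : Finset M) (hcard : s.card ≤ n) (P : Submodule R M)
    (hspan : Submodule.span R (s : Set M) = P) :
    Finite P ∧ Nat.card P ≤ Fintype.card R ^ n := by
  classical
  let L : ((s : Set M) →₀ R) →ₗ[R] M :=
    Finsupp.linearCombination R (fun x : (s : Set M) => (x : M))
  have hrange : LinearMap.range L = P := by
    rw [show L = Finsupp.linearCombination R (fun x : (s : Set M) => (x : M)) from rfl,
      Finsupp.range_linearCombination, Subtype.range_coe, hspan]
  have hsurj : Function.Surjective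
      (fun f : ((s : Set M) →₀ R) => (⟨L f, hrange ▸ LinearMap.mem_range_self L f⟩ : P)) := by
    rintro ⟨y, hy⟩
    rw [← hrange] at hy
    obtain ⟨f, hf⟩ := hy
    exact ⟨f, Subtype.ext hf⟩
  have hfin : Finite P := Finite.of_surjective _ hsurj
  refine ⟨hfin, ?_⟩
  have h1 : Nat.card P ≤ Nat.card ((s : Set M) →₀ R) :=
    Nat.card_le_card_of_surjective _ hsurj
  have h2 : Nat.card ((s : Set M) →₀ R) = Fintype.card R ^ s.card := by
    rw [Nat.card_congr (Finsupp.equivFunOnFinite)]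
    simp [Nat.card_eq_fintype_card, Fintype.card_fun]
  refine h1.trans (h2.le.trans ?_)
  exact Nat.pow_le_pow_right Fintype.card_pos hcard

/-- If `R` is a finite ring, `M` an `R`-module, and `n` a positive
integer such that every finitely generated submodule of `M` is generated by `n`
elements, then `M` is finite. -/
theorem stmt_8
    (R : Type*) [Ring R] [Fintype R]
    (M : Type*) [AddCommGroup M] [Module R M]
    (n : ℕ) (hn : 0 < n)
    (hgen : ∀ P : Submodule R M, P.FG →
      ∃ s : Finset M, s.card ≤ n ∧ Submodule.span R (s : Set M) = P) :
    Finite M := by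
  classical
  have key : ∀ P : Submodule R M, P.FG → Finite P ∧ Nat.card P ≤ Fintype.card R ^ n := by
    intro P hP
    obtain ⟨s, hcard, hspan⟩ := hgen P hP
    exact card_bound_aux R M n s hcard P hspan
  set S : Set ℕ := {k | ∃ P : Submodule R M, P.FG ∧ Nat.card P = k} with hS
  have hne : S.Nonempty := ⟨Nat.card (⊥ : Submodule R M), ⊥, Submodule.fg_bot, rfl⟩
  have hbdd : BddAbove S := by
    refine ⟨Fintype.card R ^ n, ?_⟩
    rintro k ⟨P, hP, rfl⟩
    exact (key P hP).2
  obtain ⟨P, hPfg, hPcard⟩ := Nat.sSup_mem hne hbdd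
  obtain ⟨hPfin, -⟩ := key P hPfg
  have hPtop : P = ⊤ := by
    rw [eq_top_iff]
    intro x _
    have hQfg : (P ⊔ Submodule.span R {x}).FG :=
      Submodule.FG.sup hPfg (Submodule.fg_span_singleton x)
    obtain ⟨hQfin, -⟩ := key _ hQfg
    have hPQ : P ≤ P ⊔ Submodule.span R {x} := le_sup_left
    have hle : Nat.card (P ⊔ Submodule.span R {x} : Submodule R M) ≤ Nat.card P := by
      rw [hPcard]
      exact le_csSup hbdd ⟨_, hQfg, rfl⟩
    have hsub : (P : Set M) ⊆ ((P ⊔ Submodule.span R {x} : Submodule R M) : Set M) := hPQ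
    have hfinQ : ((P ⊔ Submodule.span R {x} : Submodule R M) : Set M).Finite :=
      Set.toFinite _
    have hcards : ((P ⊔ Submodule.span R {x} : Submodule R M) : Set M).ncard ≤
        (P : Set M).ncard := by
      rwa [← Nat.card_coe_set_eq, ← Nat.card_coe_set_eq]
    have heq : (P : Set M) = ((P ⊔ Submodule.span R {x} : Submodule R M) : Set M) :=
      Set.eq_of_subset_of_ncard_le hsub hcards hfinQ
    have hx : x ∈ P ⊔ Submodule.span R {x} :=
      Submodule.mem_sup_right (Submodule.mem_span_singleton_self x)
    have : x ∈ ((P ⊔ Submodule.span R {x} : Submodule R M) : Set M) := hx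
    rw [← heq] at this
    exact this
  have : Finite (⊤ : Submodule R M) := hPtop ▸ hPfin
  exact Finite.of_equiv _ (Submodule.topEquiv (R := R) (M := M)).toEquiv
end
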